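/- arXiv:2506.08781 — 3 statements merged into one kernel-verified Lean document; each statement's English description precedes it below -/
import Mathlib

section
/- Let q be a prime, G a commutative group, and g : G an element with orderOf g = q. For a : ZMod q write g^a for g raised to the natural-number power a.val. Fix y : ZMod q, set Y = g^y, and let r e : Fin n → ZMod q be families of ephemeral randomness and ephemeral keys for an epoch of n messages. Define the per-message signatures s j = r j - (e j) * y and the aggregates s̄ = ∑ j, s j, ē = ∑ j, e j, r̄ = ∑ j, r j (all sums in ZMod q). Then g^r̄ = Y^ē * g^s̄. (Completeness of POSLO-C epoch signing: the aggregate signature of an honestly signed epoch passes the aggregate verification equation R̄ = Y^ē · α^s̄ with R̄ = α^r̄.) -/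
/-- Completeness of POSLO-C epoch signing: the aggregate signature of an honestly
signed epoch passes the aggregate verification equation `R̄ = Y^ē * g^s̄` with
`R̄ = g^r̄`, `s̄ = ∑ j, (r j - e j * y)`, `ē = ∑ j, e j`, `r̄ = ∑ j, r j`. -/
theorem poslo_c_epoch_completeness
    (q : ℕ) [Fact (Nat.Prime q)] {G : Type*} [CommGroup G]
    (g : G) (hg : orderOf g = q) (y : ZMod q) (n : ℕ) (r e : Fin n → ZMod q) :
    g ^ (∑ j, r j).val =
      (g ^ y.val) ^ (∑ j, e j).val * g ^ (∑ j, (r j - e j * y)).val := by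
  rw [← pow_mul, ← pow_add, pow_eq_pow_iff_modEq, hg]
  rw [← ZMod.natCast_eq_natCast_iff]
  push_cast [ZMod.natCast_val, ZMod.cast_id]
  rw [Finset.sum_sub_distrib, Finset.mul_sum]
  simp only [mul_comm]
  abel
end

section
/- Let q be a prime, G a commutative group, and g : G an element with orderOf g = q. For a : ZMod q write g^a for g raised to the natural-number power a.val. Fix y : ZMod q and set Y = g^y. Let I be a finite index set and, for each i ∈ I, let e i, s i : ZMod q and R i : G satisfy the verification equation R i = Y^(e i) * g^(s i). Then the multiplicative aggregate of the commitments and the additive aggregates of the signature components again satisfy the verification equation: ∏_{i ∈ I} R i = Y^(∑_{i ∈ I} e i) * g^(∑_{i ∈ I} s i). (Correctness of POSLO-C.Agg/distillation: aggregating any collection of individually valid signatures—per message, per epoch, or per umbrella group—yields a valid aggregate signature.) -/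
theorem pow_eq_pow_of_natCast_eq {G : Type*} [Monoid G] {g : G} {n : ℕ} (hg : orderOf g = n)
    {k m : ℕ} (h : (k : ZMod n) = m) : g ^ k = g ^ m := by
  rw [← pow_mod_orderOf, ← pow_mod_orderOf g m, hg, ← (ZMod.natCast_eq_natCast_iff' k m n).1 h]

/-- Correctness of POSLO-C.Agg/distillation: aggregating any collection of
individually valid signatures yields a valid aggregate signature. -/
theorem poslo_c_agg_correct
    (q : ℕ) [Fact (Nat.Prime q)] {G : Type*} [CommGroup G]
    (g : G) (hg : orderOf g = q) (y : ZMod q)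
    {ι : Type*} (I : Finset ι) (e s : ι → ZMod q) (R : ι → G)
    (h : ∀ i ∈ I, R i = (g ^ y.val) ^ (e i).val * g ^ (s i).val) :
    ∏ i ∈ I, R i =
      (g ^ y.val) ^ (∑ i ∈ I, e i).val * g ^ (∑ i ∈ I, s i).val := by
  have hR : ∀ i ∈ I, R i = g ^ (y.val * (e i).val + (s i).val) := fun i hi => by
    rw [h i hi, pow_add, pow_mul]
  rw [Finset.prod_congr rfl hR, Finset.prod_pow_eq_pow_sum, ← pow_mul, ← pow_add]
  apply pow_eq_pow_of_natCast_eq hg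
  push_cast [ZMod.natCast_zmod_val]
  rw [Finset.sum_add_distrib, Finset.mul_sum]
end

section
/- Let q be a prime, G a commutative group, and g : G an element with orderOf g = q. For a : ZMod q write g^a for g raised to the natural-number power a.val. Fix y : ZMod q and set Y = g^y. Let n₁ k : ℕ, let e : Fin n₁ → Fin (2^k) → ZMod q be the table of per-message ephemeral keys, let S : ZMod q and R̄ : G, and let Red be the tree-based parallel reduction defined by Red 0 v = v 0 and Red (k+1) v = Red k (fun i => v i + v (i + 2^k)). Then the parallel batch-verification check R̄ = Y^(∑_{i} Red k (e i)) * g^S holds if and only if the sequential batch-verification check R̄ = Y^(∑_{i} ∑_{j} e i j) * g^S holds. (POSLO.PAVer accepts an aggregate signature exactly when the sequential POSLO.AVer does: by the additive homomorphism of aggregation, the per-block tree reductions followed by a final aggregation compute the same aggregate ephemeral key ē as sequential hashing and summation.) -/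
/-- Tree-based parallel reduction of the POSLO.PAVer CUDA kernel. -/
def treeReduce {M : Type*} [AddCommMonoid M] : (k : ℕ) → (Fin (2 ^ k) → M) → M
  | 0, v => v 0
  | k + 1, v =>
      treeReduce k (fun i : Fin (2 ^ k) =>
        v ⟨i.val, lt_of_lt_of_le i.isLt (Nat.pow_le_pow_right (by norm_num) (Nat.le_succ k))⟩ +
        v ⟨i.val + 2 ^ k, by have h := i.isLt; rw [pow_succ]; omega⟩)

lemma treeReduce_eq_sum {M : Type*} [AddCommMonoid M] :
    ∀ (k : ℕ) (v : Fin (2 ^ k) → M), treeReduce k v = ∑ i, v i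
  | 0, v => by simp [treeReduce]
  | k + 1, v => by
    rw [treeReduce, treeReduce_eq_sum k, Finset.sum_add_distrib]
    have h : 2 ^ (k + 1) = 2 ^ k + 2 ^ k := by rw [pow_succ]; omega
    rw [show (∑ i, v i) = ∑ i : Fin (2 ^ k + 2 ^ k), v (Fin.cast h.symm i) from
      (Fin.sum_congr' v h.symm).symm, Fin.sum_univ_add]
    congr 1 <;> exact Finset.sum_congr rfl fun i _ => congrArg v (Fin.ext (by simp [Nat.add_comm]))

/-- POSLO.PAVer accepts an aggregate signature exactly when the sequential
POSLO.AVer does: the per-block tree reductions followed by a final aggregation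
compute the same aggregate ephemeral key as sequential summation. -/
theorem poslo_paver_iff_aver
    (q : ℕ) [Fact (Nat.Prime q)] {G : Type*} [CommGroup G]
    (g : G) (hg : orderOf g = q) (y : ZMod q) (n₁ k : ℕ)
    (e : Fin n₁ → Fin (2 ^ k) → ZMod q) (S : ZMod q) (R : G) :
    (R = (g ^ y.val) ^ (∑ i, treeReduce k (e i)).val * g ^ S.val) ↔
    (R = (g ^ y.val) ^ (∑ i, ∑ j, e i j).val * g ^ S.val) := by
  simp only [treeReduce_eq_sum]
end
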